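/- arXiv:1604.02638 — 4 statements merged into one kernel-verified Lean document; each statement's English description precedes it below -/
import Mathlib

section
/- Let T be an invertible transformation, J a subset, and suppose every point of J returns to J under T with first return times all congruent to 1 mod q. Then the induced (first-return) map of T^q on J equals the q-th power of the induced map of T on J: T^q|_J = (T|_J)^q. -/
/-- The first return time of `f` to `J` at `x`: the least `n ≥ 1` with `f^[n] x ∈ J`. -/
noncomputable def retTime {X : Type*} (f : X → X) (J : Set X) (x : X) : ℕ :=
  sInf {n : ℕ | 0 < n ∧ f^[n] x ∈ J}

/-- The first return (induced) map of `f` on `J`. -/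
noncomputable def retMap {X : Type*} (f : X → X) (J : Set X) (x : X) : X :=
  f^[retTime f J x] x

/-- Sum of the first `j` consecutive first-return times starting at `x`. -/
noncomputable def tSum {X : Type*} (f : X → X) (J : Set X) : X → ℕ → ℕ
  | _, 0 => 0
  | x, j + 1 => retTime f J x + tSum f J (retMap f J x) j

lemma retTime_spec {X : Type*} (f : X → X) (J : Set X) {x : X}
    (h : ∃ n : ℕ, 0 < n ∧ f^[n] x ∈ J) :
    0 < retTime f J x ∧ f^[retTime f J x] x ∈ J :=
  Nat.sInf_mem h

lemma tSum_iterate {X : Type*} (f : X → X) (J : Set X) :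
    ∀ (j : ℕ) (x : X), f^[tSum f J x j] x = (retMap f J)^[j] x := by
  intro j
  induction j with
  | zero => intro x; rfl
  | succ j ih =>
    intro x
    show f^[retTime f J x + tSum f J (retMap f J x) j] x = _
    rw [add_comm, Function.iterate_add_apply]
    have : f^[retTime f J x] x = retMap f J x := rfl
    rw [this, ih, Function.iterate_succ_apply]

lemma tSum_mono {X : Type*} (f : X → X) (J : Set X) :
    ∀ (j : ℕ) (x : X), tSum f J x j ≤ tSum f J x (j + 1) := by
  intro j
  induction j with
  | zero => intro x; exact Nat.zero_le _
  | succ j ih =>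
    intro x
    exact Nat.add_le_add_left (ih (retMap f J x)) _

lemma tSum_le {X : Type*} (f : X → X) (J : Set X) (x : X) {j j' : ℕ} (h : j ≤ j') :
    tSum f J x j ≤ tSum f J x j' :=
  monotone_nat_of_le_succ (fun j => tSum_mono f J j x) h

/-- If `T` is invertible, every point of `J` returns to `J`, and all first-return
times to `J` are `≡ 1 (mod q)`, then the induced map of `T^q` on `J` equals the
`q`-th power of the induced map of `T` on `J`. -/
theorem stmt4 {X : Type*} (T : Equiv.Perm X) (J : Set X) (q : ℕ) (hq : 1 ≤ q)
    (hret : ∀ x ∈ J, ∃ n : ℕ, 0 < n ∧ (⇑T)^[n] x ∈ J)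
    (hmod : ∀ x ∈ J, retTime (⇑T) J x % q = 1 % q) :
    ∀ x ∈ J, retMap ((⇑T)^[q]) J x = (retMap (⇑T) J)^[q] x := by
  set f : X → X := ⇑T with hf
  -- retMap stays in J
  have hmapJ : ∀ x ∈ J, retMap f J x ∈ J := fun x hx => (retTime_spec f J (hret x hx)).2
  have hiterJ : ∀ (j : ℕ) (x : X), x ∈ J → (retMap f J)^[j] x ∈ J := by
    intro j
    induction j with
    | zero => intro x hx; exact hx
    | succ j ih =>
      intro x hx
      rw [Function.iterate_succ_apply]
      exact ih _ (hmapJ x hx)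
  -- tSum mod q
  have htmod : ∀ (j : ℕ) (x : X), x ∈ J → tSum f J x j % q = j % q := by
    intro j
    induction j with
    | zero => intro x hx; rfl
    | succ j ih =>
      intro x hx
      show (retTime f J x + tSum f J (retMap f J x) j) % q = _
      rw [Nat.add_mod, hmod x hx, ih _ (hmapJ x hx), Nat.add_comm j 1, Nat.add_mod 1 j]
  -- decomposition: any return time is a sum of consecutive first-return times
  have hdecomp : ∀ (n : ℕ), ∀ x ∈ J, 0 < n → f^[n] x ∈ J →
      ∃ j : ℕ, 0 < j ∧ tSum f J x j = n := by
    intro n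
    induction n using Nat.strong_induction_on with
    | _ n ih =>
      intro x hx hn hnx
      have hmem : n ∈ {m : ℕ | 0 < m ∧ f^[m] x ∈ J} := ⟨hn, hnx⟩
      have hrle : retTime f J x ≤ n := Nat.sInf_le hmem
      have hspec := retTime_spec f J ⟨n, hmem⟩
      rcases eq_or_lt_of_le hrle with heq | hlt
      · exact ⟨1, Nat.one_pos, by simpa [tSum] using heq⟩
      · set r := retTime f J x
        have hy : retMap f J x ∈ J := hspec.2
        have hsub : f^[n - r] (retMap f J x) ∈ J := by
          have : f^[n - r] (f^[r] x) = f^[n] x := by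
            rw [← Function.iterate_add_apply, Nat.sub_add_cancel hrle]
          rw [retMap, this]
          exact hnx
        have hpos : 0 < n - r := Nat.sub_pos_of_lt hlt
        obtain ⟨j, hj, hjs⟩ := ih (n - r) (Nat.sub_lt hn hspec.1) _ hy hpos hsub
        refine ⟨j + 1, Nat.succ_pos _, ?_⟩
        show r + tSum f J (retMap f J x) j = n
        rw [hjs, Nat.add_sub_cancel' hrle]
  -- main argument
  intro x hx
  set S := tSum f J x q with hS
  have hSmod : S % q = 0 := by
    rw [hS, htmod q x hx, Nat.mod_self]
  have hSpos : 0 < S := by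
    have h1 : tSum f J x 1 ≤ S := tSum_le f J x hq
    have : 0 < tSum f J x 1 := by
      have := (retTime_spec f J (hret x hx)).1
      simpa [tSum] using this
    omega
  obtain ⟨m, hm⟩ : q ∣ S := Nat.dvd_of_mod_eq_zero hSmod
  have hmpos : 0 < m := by
    rcases Nat.eq_zero_or_pos m with h0 | h
    · subst h0; simp at hm; omega
    · exact h
  have hSiter : f^[S] x = (retMap f J)^[q] x := tSum_iterate f J q x
  have hSJ : f^[S] x ∈ J := hSiter ▸ hiterJ q x hx
  -- the candidate m is in the return-time set of f^[q]
  have hqm : (f^[q])^[m] x = f^[S] x := by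
    rw [← Function.iterate_mul, ← hm]
  have hmmem : m ∈ {n : ℕ | 0 < n ∧ (f^[q])^[n] x ∈ J} := ⟨hmpos, by rw [hqm]; exact hSJ⟩
  -- minimality
  have hmin : ∀ k ∈ {n : ℕ | 0 < n ∧ (f^[q])^[n] x ∈ J}, m ≤ k := by
    rintro k ⟨hk, hkJ⟩
    have hkJ' : f^[q * k] x ∈ J := by
      rw [Function.iterate_mul]; exact hkJ
    obtain ⟨j, hj, hjs⟩ := hdecomp (q * k) x hx (Nat.mul_pos (by omega) hk) hkJ'
    have hjmod : j % q = 0 := by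
      have h1 := htmod j x hx
      rw [hjs, Nat.mul_mod_right] at h1
      omega
    have hqj : q ≤ j := Nat.le_of_dvd hj (Nat.dvd_of_mod_eq_zero hjmod)
    have hSle : S ≤ q * k := hjs ▸ tSum_le f J x hqj
    rw [hm] at hSle
    exact Nat.le_of_mul_le_mul_left hSle (by omega)
  have hrt : retTime (f^[q]) J x = m := by
    have hle : retTime (f^[q]) J x ≤ m := Nat.sInf_le hmmem
    have hmem := Nat.sInf_mem (⟨m, hmmem⟩ : Set.Nonempty {n : ℕ | 0 < n ∧ (f^[q])^[n] x ∈ J})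
    have hge := hmin _ hmem
    exact le_antisymm hle hge
  rw [retMap, hrt, hqm, hSiter]
end

section
/- If an interval exchange transformation T = T_{(λ,π)} satisfies the infinite distinct orbit condition (i.d.o.c.), then for every positive integer q, T^q also satisfies the i.d.o.c. -/
/-- The backward orbit `{T⁻ʲ x : j ∈ ℕ}` of a point under an invertible map. -/
def backOrbit {X : Type*} (T : Equiv.Perm X) (x : X) : Set X :=
  Set.range fun j : ℕ => (⇑T.symm)^[j] x

/-- Keane's infinite distinct orbit condition for an invertible map `T` with
marked (discontinuity) points `β i`: the backward orbits of the `β i` are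
infinite and pairwise disjoint. -/
def Idoc {X ι : Type*} (T : Equiv.Perm X) (β : ι → X) : Prop :=
  (∀ i, (backOrbit T (β i)).Infinite) ∧
    Pairwise fun i₁ i₂ => Disjoint (backOrbit T (β i₁)) (backOrbit T (β i₂))

private lemma iter_key {X : Type*} (T : Equiv.Perm X) (q k i : ℕ) (x : X) :
    (⇑(T ^ q).symm)^[k] ((⇑T.symm)^[i] x) = (⇑T.symm)^[q * k + i] x := by
  have h1 : ⇑(T ^ q).symm = (⇑T.symm)^[q] := by
    rw [← Equiv.Perm.inv_def, ← inv_pow, Equiv.Perm.inv_def, Equiv.Perm.coe_pow]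
  rw [h1, ← Function.iterate_mul, ← Function.iterate_add_apply]

private lemma finite_orbit {X : Type*} (g : X → X) (x : X) (a b : ℕ) (hlt : a < b)
    (hab : g^[a] x = g^[b] x) : (Set.range fun n : ℕ => g^[n] x).Finite := by
  have key : ∀ n : ℕ, g^[n] x ∈ (fun n : ℕ => g^[n] x) '' Set.Iio b := by
    intro n
    induction n using Nat.strong_induction_on with
    | _ n ih =>
      rcases lt_or_ge n b with hn | hn
      · exact ⟨n, hn, rfl⟩
      · have h1 : g^[n] x = g^[n - b + a] x := by
          calc g^[n] x = g^[n - b] (g^[b] x) := by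
                rw [← Function.iterate_add_apply]; congr 1; omega
            _ = g^[n - b] (g^[a] x) := by rw [hab]
            _ = g^[n - b + a] x := (Function.iterate_add_apply g _ _ x).symm
        rw [h1]
        exact ih (n - b + a) (by omega)
  have hsub : Set.range (fun n : ℕ => g^[n] x) ⊆ (fun n : ℕ => g^[n] x) '' Set.Iio b := by
    rintro _ ⟨n, rfl⟩; exact key n
  exact ((Set.finite_Iio b).image _).subset hsub

private lemma inj_of_infinite {X : Type*} (T : Equiv.Perm X) (x : X)
    (h : (backOrbit T x).Infinite) :
    Function.Injective fun n : ℕ => (⇑T.symm)^[n] x := by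
  intro a b hab
  by_contra hne
  rcases Ne.lt_or_gt hne with hlt | hlt
  · exact h (finite_orbit _ x a b hlt hab)
  · exact h (finite_orbit _ x b a hlt hab.symm)

/-- If `T` satisfies the i.d.o.c. with respect to its discontinuities `β`, then for
every `q ≥ 1` the power `T^q` satisfies the i.d.o.c. with respect to its
discontinuities `{T⁻ⁱ β_j : 0 ≤ i < q}`. -/
theorem stmt5 {X ι : Type*} (T : Equiv.Perm X) (β : ι → X) (q : ℕ) (hq : 0 < q)
    (h : Idoc T β) :
    Idoc (T ^ q) (fun p : Fin q × ι => (⇑T.symm)^[p.1.val] (β p.2)) := by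
  obtain ⟨hinf, hdisj⟩ := h
  have hinj : ∀ i, Function.Injective fun n : ℕ => (⇑T.symm)^[n] (β i) :=
    fun i => inj_of_infinite T (β i) (hinf i)
  constructor
  · rintro ⟨i, j⟩
    have heq : backOrbit (T ^ q) ((⇑T.symm)^[i.val] (β j)) =
        Set.range fun k : ℕ => (⇑T.symm)^[q * k + i.val] (β j) := by
      unfold backOrbit
      simp only [iter_key]
    rw [heq]
    apply Set.infinite_range_of_injective
    intro k l hkl
    have h2 : q * k + i.val = q * l + i.val := hinj j hkl
    have h3 : q * k = q * l := by omega
    exact Nat.eq_of_mul_eq_mul_left hq h3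
  · rintro ⟨i₁, j₁⟩ ⟨i₂, j₂⟩ hne
    rw [Set.disjoint_left]
    rintro y ⟨k, hk⟩ ⟨l, hl⟩
    simp only [iter_key] at hk hl
    by_cases hj : j₁ = j₂
    · subst hj
      have h2 : q * k + i₁.val = q * l + i₂.val := hinj j₁ (hk.trans hl.symm)
      have hi : i₁.val = i₂.val := by
        have e1 : (q * k + i₁.val) % q = i₁.val := by
          rw [Nat.mul_add_mod, Nat.mod_eq_of_lt i₁.isLt]
        have e2 : (q * l + i₂.val) % q = i₂.val := by
          rw [Nat.mul_add_mod, Nat.mod_eq_of_lt i₂.isLt]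
        rw [← e1, ← e2, h2]
      exact hne (Prod.ext (Fin.ext hi) rfl)
    · exact Set.disjoint_left.mp (hdisj hj) ⟨q * k + i₁.val, hk⟩ ⟨q * l + i₂.val, hl⟩
end

section
/- For a positive m×m matrix M and a nonnegative m×m matrix P with PM having all column sums positive (e.g., P has no zero row), v(PM) ≤ v(M), where v(M) = max_{i,j,k} M_{ij}/M_{ik}. -/
/-- For a positive matrix `M` and a nonnegative matrix `P` with no zero row,
`v(P·M) ≤ v(M)`, where `v(A) = max_{i,j,k} A i j / A i k`. -/
theorem stmt13 {m : ℕ} [NeZero m] (M P : Matrix (Fin m) (Fin m) ℝ)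
    (hM : ∀ i j, 0 < M i j) (hP : ∀ i j, 0 ≤ P i j)
    (hrow : ∀ i, ∃ j, 0 < P i j) :
    (⨆ p : Fin m × Fin m × Fin m, (P * M) p.1 p.2.1 / (P * M) p.1 p.2.2) ≤
      ⨆ p : Fin m × Fin m × Fin m, M p.1 p.2.1 / M p.1 p.2.2 := by
  set T := ⨆ p : Fin m × Fin m × Fin m, M p.1 p.2.1 / M p.1 p.2.2 with hT
  have hbdd : BddAbove (Set.range fun p : Fin m × Fin m × Fin m =>
      M p.1 p.2.1 / M p.1 p.2.2) := Set.Finite.bddAbove (Set.finite_range _)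
  have hle : ∀ l j k, M l j / M l k ≤ T := fun l j k =>
    le_ciSup hbdd (⟨l, j, k⟩ : Fin m × Fin m × Fin m)
  apply ciSup_le
  rintro ⟨i, j, k⟩
  simp only [Matrix.mul_apply]
  have hpos : 0 < ∑ l, P i l * M l k := by
    obtain ⟨l0, hl0⟩ := hrow i
    refine Finset.sum_pos' (fun l _ => mul_nonneg (hP i l) (hM l k).le) ?_
    exact ⟨l0, Finset.mem_univ _, mul_pos hl0 (hM l0 k)⟩
  rw [div_le_iff₀ hpos]
  calc ∑ l, P i l * M l j ≤ ∑ l, P i l * (T * M l k) := by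
        refine Finset.sum_le_sum fun l _ => mul_le_mul_of_nonneg_left ?_ (hP i l)
        rw [← div_le_iff₀ (hM l k)]; exact hle l j k
    _ = T * ∑ l, P i l * M l k := by rw [Finset.mul_sum]; congr 1; funext l; ring
end

section
/- Let (X, ℬ, μ, T) be an invertible measure-preserving system on a standard probability space such that T^n is rank one for every n ≥ 1 and T is rigid. Then the set of rank one transformations in the weak closure Wcl(T) of {T^n : n ∈ ℤ} in the group Aut(X, μ) (with the weak topology) contains a dense G_δ subset of Wcl(T). -/
open MeasureTheory Filter Topology Set
open scoped ENNReal symmDiff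

variable (X : Type*) [MeasurableSpace X]

/-- The group of invertible measure-preserving transformations of `(X, μ)`. -/
def AutM (μ : Measure X) : Type _ :=
  {T : X ≃ᵐ X // MeasurePreserving T μ μ}

/-- The weak topology on `Aut(X, μ)`, generated by the sets
`{S : μ(S⁻¹A Δ T⁻¹A) < ε}` for `T ∈ Aut(X, μ)`, `A` measurable and `ε > 0`. -/
instance weakTop (μ : Measure X) : TopologicalSpace (AutM X μ) :=
  TopologicalSpace.generateFrom
    {U | ∃ (T : AutM X μ) (A : Set X) (ε : ℝ≥0∞), MeasurableSet A ∧ 0 < ε ∧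
      U = {S : AutM X μ | μ (symmDiff (⇑S.1 ⁻¹' A) (⇑T.1 ⁻¹' A)) < ε}}

/-- `f` is a rank one transformation of `(X, μ)`: every finite measurable partition
is `ε`-refined by the partition into levels of a single Rokhlin tower
`B, fB, ..., f^{n-1}B` together with the complement of the tower. -/
def IsRankOneMap (μ : Measure X) (f : X → X) : Prop :=
  ∀ P : Finset (Set X), (∀ p ∈ P, MeasurableSet p) → ∀ ε : ℝ≥0∞, 0 < ε →
    ∃ (B : Set X) (n : ℕ), MeasurableSet B ∧
      (∀ i < n, ∀ j < n, i ≠ j → Disjoint (f^[i] '' B) (f^[j] '' B)) ∧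
      ∀ p ∈ P, ∃ I : Finset ℕ, (∀ i ∈ I, i < n) ∧
        μ (symmDiff p (⋃ i ∈ I, f^[i] '' B)) < ε

/-- `f` is rigid: `f^{n_k} → Id` weakly along some strictly increasing sequence. -/
def IsRigidMap (μ : Measure X) (f : X → X) : Prop :=
  ∃ n : ℕ → ℕ, StrictMono n ∧ ∀ A : Set X, MeasurableSet A →
    Tendsto (fun k => μ (symmDiff (f^[n k] ⁻¹' A) A)) atTop (𝓝 0)

/-- Nonnegative powers of a measurable equivalence. -/
def mePowNat (e : X ≃ᵐ X) : ℕ → (X ≃ᵐ X)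
  | 0 => MeasurableEquiv.refl X
  | n + 1 => (mePowNat e n).trans e

/-- Integer powers of a measurable equivalence. -/
def mePow (e : X ≃ᵐ X) : ℤ → (X ≃ᵐ X)
  | Int.ofNat n => mePowNat X e n
  | Int.negSucc n => mePowNat X e.symm (n + 1)

/-- The weak closure `Wcl(T)` of the set of integer powers `{T^n : n ∈ ℤ}`. -/
def Wcl (μ : Measure X) (T : AutM X μ) : Set (AutM X μ) :=
  closure {S : AutM X μ | ∃ n : ℤ, S.1 = mePow X T.1 n}

/-!
The countably many conditions "some tower of `S` approximates `A_j`, `j ∈ F`, within `1/k`",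
for `(A_j)` a measure-dense sequence, define a `G_δ` set of rank one maps. Each condition is
weakly open: if `S'` is weakly close to `S` on the first `n` levels of an `S`-tower with base
`B`, then removing from `B` the points of `S'^d B`, `0 < d < n`, yields an `S'`-tower whose
levels are close to those of `S`. Every positive power of `T` satisfies all the conditions, and
by rigidity `T^m = lim_k T^(n_k + m)`, so the positive powers are dense in `Wcl(T)`.
-/

section Powers

variable {X}

theorem coe_mePowNat (e : X ≃ᵐ X) (n : ℕ) : ⇑(mePowNat X e n) = (⇑e)^[n] := by
  induction n with
  | zero => rfl
  | succ n ih => rw [Function.iterate_succ', ← ih]; rfl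

theorem coe_mePow (e : X ≃ᵐ X) (n : ℤ) : ⇑(mePow X e n) = ⇑(e.toEquiv ^ n) := by
  cases n with
  | ofNat n => exact coe_mePowNat e n
  | negSucc n =>
    rw [zpow_negSucc, ← inv_pow, Equiv.Perm.coe_pow, Equiv.Perm.inv_def]
    exact coe_mePowNat e.symm (n + 1)

theorem measurableSet_iterate_image (e : X ≃ᵐ X) (i : ℕ) {s : Set X} (hs : MeasurableSet s) :
    MeasurableSet ((⇑e)^[i] '' s) := by
  rw [← coe_mePowNat]
  exact (mePowNat X e i).measurableSet_image.2 hs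

variable {μ : Measure X} {e : X ≃ᵐ X}

theorem measurePreserving_mePowNat (he : MeasurePreserving e μ μ) (i : ℕ) :
    MeasurePreserving (mePowNat X e i) μ μ := by
  rw [coe_mePowNat]
  exact he.iterate i

theorem measure_image (he : MeasurePreserving e μ μ) (s : Set X) : μ (e '' s) = μ s := by
  rw [e.image_eq_preimage_symm]
  exact (he.symm e).measure_preimage_equiv s

theorem measure_iterate_image (he : MeasurePreserving e μ μ) (i : ℕ) (s : Set X) :
    μ ((⇑e)^[i] '' s) = μ s := by
  rw [← coe_mePowNat]
  exact measure_image (measurePreserving_mePowNat he i) s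

theorem measure_iterate_image_symmDiff (he : MeasurePreserving e μ μ) (i : ℕ) (s t : Set X) :
    μ (((⇑e)^[i] '' s) ∆ ((⇑e)^[i] '' t)) = μ (s ∆ t) := by
  rw [← Set.image_symmDiff (e.injective.iterate i), measure_iterate_image he]

theorem measure_iterate_image_symmDiff_le (he : MeasurePreserving e μ μ) (f : X → X)
    (B : Set X) (d : ℕ) :
    μ (((⇑e)^[d] '' B) ∆ (f^[d] '' B)) ≤
      ∑ j ∈ Finset.range d, μ ((e '' (f^[j] '' B)) ∆ (f '' (f^[j] '' B))) := by
  induction d with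
  | zero => simp
  | succ d ih =>
    rw [Finset.sum_range_succ, Function.iterate_succ', Function.iterate_succ', Set.image_comp,
      Set.image_comp]
    calc μ ((e '' ((⇑e)^[d] '' B)) ∆ (f '' (f^[d] '' B)))
        ≤ μ ((e '' ((⇑e)^[d] '' B)) ∆ (e '' (f^[d] '' B))) +
            μ ((e '' (f^[d] '' B)) ∆ (f '' (f^[d] '' B))) := measure_symmDiff_le _ _ _
      _ ≤ _ := by
        gcongr
        simpa using (measure_iterate_image_symmDiff he 1 _ _).trans_le ih

end Powers

section TowerBase

variable {α : Type*}

def IsTower (f : α → α) (B : Set α) (n : ℕ) : Prop :=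
  ∀ i < n, ∀ j < n, i ≠ j → Disjoint (f^[i] '' B) (f^[j] '' B)

def trimBase (g : α → α) (B : Set α) (n : ℕ) : Set α :=
  B \ ⋃ d ∈ Finset.Ioo 0 n, g^[d] '' B

theorem trimBase_subset (g : α → α) (B : Set α) (n : ℕ) : trimBase g B n ⊆ B :=
  Set.sdiff_subset

theorem isTower_trimBase {g : α → α} (hg : Function.Injective g) (B : Set α) (n : ℕ) :
    IsTower g (trimBase g B n) n := by
  have key : ∀ i j, j < n → i < j →
      Disjoint (g^[i] '' trimBase g B n) (g^[j] '' trimBase g B n) := by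
    intro i j hj hij
    obtain ⟨d, rfl⟩ : ∃ d, j = i + d := ⟨j - i, by omega⟩
    rw [Function.iterate_add, Set.image_comp, Set.disjoint_image_iff (hg.iterate i)]
    refine Set.disjoint_left.2 fun x hx hx' => hx.2 ?_
    exact Set.mem_biUnion (Finset.mem_Ioo.2 ⟨by omega, by omega⟩)
      (Set.image_mono Set.sdiff_subset hx')
  intro i hi j hj hne
  rcases hne.lt_or_gt with h | h
  · exact key i j hj h
  · exact (key j i hi h).symm

end TowerBase

section Towers

variable {X} {μ : Measure X}

def ApproxByTower (μ : Measure X) (f : X → X) (P : Finset (Set X)) (ε : ℝ≥0∞) : Prop :=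
  ∃ (B : Set X) (n : ℕ), MeasurableSet B ∧ IsTower f B n ∧
    ∀ p ∈ P, ∃ I : Finset ℕ, (∀ i ∈ I, i < n) ∧ μ (p ∆ ⋃ i ∈ I, f^[i] '' B) < ε

theorem isRankOneMap_iff {f : X → X} :
    IsRankOneMap X μ f ↔ ∀ P : Finset (Set X), (∀ p ∈ P, MeasurableSet p) →
      ∀ ε : ℝ≥0∞, 0 < ε → ApproxByTower μ f P ε :=
  Iff.rfl

theorem measure_sdiff_trimBase_le {f g : X → X} {B : Set X} {n : ℕ} {η : ℝ≥0∞}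
    (hB : IsTower f B n) (hclose : ∀ d < n, μ ((g^[d] '' B) ∆ (f^[d] '' B)) ≤ η) :
    μ (B \ trimBase g B n) ≤ n * η := by
  have hsub : B \ trimBase g B n ⊆ ⋃ d ∈ Finset.Ioo 0 n, (g^[d] '' B) ∆ (f^[d] '' B) := by
    rintro x ⟨hxB, hx⟩
    have hxU : x ∈ ⋃ d ∈ Finset.Ioo 0 n, g^[d] '' B := by_contra fun h => hx ⟨hxB, h⟩
    simp only [Set.mem_iUnion] at hxU ⊢
    obtain ⟨d, hd, hxd⟩ := hxU
    have hd' := Finset.mem_Ioo.1 hd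
    refine ⟨d, hd, Or.inl ⟨hxd, fun hxf => ?_⟩⟩
    exact Set.disjoint_left.1 (hB 0 (by omega) d hd'.2 (by omega)) (by simpa using hxB) hxf
  calc μ (B \ trimBase g B n)
      ≤ ∑ d ∈ Finset.Ioo 0 n, μ ((g^[d] '' B) ∆ (f^[d] '' B)) :=
        (measure_mono hsub).trans (measure_biUnion_finset_le _ _)
    _ ≤ ∑ d ∈ Finset.Ioo 0 n, η := Finset.sum_le_sum fun d hd => hclose d (Finset.mem_Ioo.1 hd).2
    _ ≤ n * η := by
        rw [Finset.sum_const, nsmul_eq_mul, Nat.card_Ioo]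
        gcongr
        exact_mod_cast Nat.sub_le n 1

theorem measure_iterate_image_trimBase_symmDiff_le {e : X ≃ᵐ X} (he : MeasurePreserving e μ μ)
    {f : X → X} {B : Set X} {n : ℕ} {η : ℝ≥0∞} (hB : IsTower f B n)
    (hclose : ∀ d < n, μ (((⇑e)^[d] '' B) ∆ (f^[d] '' B)) ≤ η) {i : ℕ} (hi : i < n) :
    μ (((⇑e)^[i] '' trimBase e B n) ∆ (f^[i] '' B)) ≤ (n + 1) * η :=
  calc μ (((⇑e)^[i] '' trimBase e B n) ∆ (f^[i] '' B))
      ≤ μ (((⇑e)^[i] '' trimBase e B n) ∆ ((⇑e)^[i] '' B)) + μ (((⇑e)^[i] '' B) ∆ (f^[i] '' B)) :=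
        measure_symmDiff_le _ _ _
    _ ≤ n * η + η := by
        rw [measure_iterate_image_symmDiff he, symmDiff_of_le (trimBase_subset _ _ _)]
        exact add_le_add (measure_sdiff_trimBase_le hB hclose) (hclose i hi)
    _ = (n + 1) * η := by ring

theorem measure_biUnion_symmDiff_biUnion_le {ι : Type*} (I : Finset ι) (s t : ι → Set X) :
    μ ((⋃ i ∈ I, s i) ∆ ⋃ i ∈ I, t i) ≤ ∑ i ∈ I, μ (s i ∆ t i) :=
  (measure_mono (Set.iUnion_symmDiff_iUnion_subset.trans
    (Set.iUnion_mono fun _ => Set.iUnion_symmDiff_iUnion_subset))).trans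
    (measure_biUnion_finset_le I _)

theorem approxByTower_of_forall_measure_symmDiff_le {e : X ≃ᵐ X} (he : MeasurePreserving e μ μ)
    {f : X → X} {B : Set X} {n : ℕ} {P : Finset (Set X)} {ε η : ℝ≥0∞} (hBm : MeasurableSet B)
    (hB : IsTower f B n)
    (hP : ∀ p ∈ P, ∃ I : Finset ℕ, (∀ i ∈ I, i < n) ∧
      μ (p ∆ ⋃ i ∈ I, f^[i] '' B) + n * ((n + 1) * η) < ε)
    (hclose : ∀ d < n, μ (((⇑e)^[d] '' B) ∆ (f^[d] '' B)) ≤ η) :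
    ApproxByTower μ e P ε := by
  refine ⟨trimBase e B n, n, ?_, isTower_trimBase e.injective B n, fun p hp => ?_⟩
  · exact hBm.diff (Finset.measurableSet_biUnion _ fun d _ => measurableSet_iterate_image e d hBm)
  obtain ⟨I, hIn, hpI⟩ := hP p hp
  have hcard : (I.card : ℝ≥0∞) ≤ n := by
    exact_mod_cast (Finset.card_le_card fun i hi => Finset.mem_range.2 (hIn i hi)).trans
      (Finset.card_range n).le
  refine ⟨I, hIn, lt_of_le_of_lt ?_ hpI⟩
  calc μ (p ∆ ⋃ i ∈ I, (⇑e)^[i] '' trimBase e B n)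
      ≤ μ (p ∆ ⋃ i ∈ I, f^[i] '' B) +
          μ ((⋃ i ∈ I, f^[i] '' B) ∆ ⋃ i ∈ I, (⇑e)^[i] '' trimBase e B n) :=
        measure_symmDiff_le _ _ _
    _ ≤ μ (p ∆ ⋃ i ∈ I, f^[i] '' B) + ∑ _i ∈ I, (n + 1) * η := by
        gcongr
        refine (measure_biUnion_symmDiff_biUnion_le I _ _).trans (Finset.sum_le_sum fun i hi => ?_)
        rw [symmDiff_comm]
        exact measure_iterate_image_trimBase_symmDiff_le he hB hclose (hIn i hi)
    _ ≤ μ (p ∆ ⋃ i ∈ I, f^[i] '' B) + n * ((n + 1) * η) := by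
        rw [Finset.sum_const, nsmul_eq_mul]
        gcongr

end Towers

theorem exists_pos_forall_add_mul_lt {ι : Type*} {P : Finset ι} {c : ι → ℝ≥0∞} {ε K : ℝ≥0∞}
    (hK : K ≠ ∞) (hc : ∀ p ∈ P, c p < ε) : ∃ δ > 0, ∀ p ∈ P, c p + K * δ < ε := by
  have hγ : 0 < P.inf fun p => ε - c p :=
    (Finset.lt_inf_iff ENNReal.zero_lt_top).2 fun p hp => tsub_pos_of_lt (hc p hp)
  obtain ⟨δ, hδ, hδK⟩ := ENNReal.exists_pos_mul_lt hK hγ.ne'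
  refine ⟨δ, hδ, fun p hp => ?_⟩
  calc c p + K * δ < c p + (ε - c p) := by
        refine ENNReal.add_lt_add_left (hc p hp).ne_top ?_
        rw [mul_comm]
        exact hδK.trans_le (Finset.inf_le hp)
    _ = ε := add_tsub_cancel_of_le (hc p hp).le

namespace AutM

variable {X} {μ : Measure X}

theorem tendsto_of_tendsto_measure_preimage_symmDiff {ι : Type*} {l : Filter ι}
    {u : ι → AutM X μ} {S : AutM X μ}
    (h : ∀ A, MeasurableSet A → Tendsto (fun k => μ (((u k).1 ⁻¹' A) ∆ (S.1 ⁻¹' A))) l (𝓝 0)) :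
    Tendsto u l (𝓝 S) := by
  refine TopologicalSpace.tendsto_nhds_generateFrom_iff.2 ?_
  rintro _ ⟨T', A, ε, hA, -, rfl⟩ hS
  have hgap : 0 < ε - μ ((S.1 ⁻¹' A) ∆ (T'.1 ⁻¹' A)) := tsub_pos_of_lt hS
  filter_upwards [(h A hA).eventually (gt_mem_nhds hgap)] with k hk
  calc μ (((u k).1 ⁻¹' A) ∆ (T'.1 ⁻¹' A))
      ≤ μ (((u k).1 ⁻¹' A) ∆ (S.1 ⁻¹' A)) + μ ((S.1 ⁻¹' A) ∆ (T'.1 ⁻¹' A)) :=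
        measure_symmDiff_le _ _ _
    _ < (ε - μ ((S.1 ⁻¹' A) ∆ (T'.1 ⁻¹' A))) + μ ((S.1 ⁻¹' A) ∆ (T'.1 ⁻¹' A)) :=
        ENNReal.add_lt_add_right hS.ne_top hk
    _ = ε := tsub_add_cancel_of_le hS.le

theorem isOpen_setOf_measure_image_symmDiff_lt (S : AutM X μ) {C : Set X} (hC : MeasurableSet C)
    (δ : ℝ≥0∞) : IsOpen {S' : AutM X μ | μ ((S'.1 '' C) ∆ (S.1 '' C)) < δ} := by
  rcases eq_or_ne δ 0 with rfl | hδ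
  · simp
  have key : ∀ S' : AutM X μ,
      μ ((S'.1 '' C) ∆ (S.1 '' C)) = μ ((S'.1 ⁻¹' (S.1 '' C)) ∆ (S.1 ⁻¹' (S.1 '' C))) := by
    intro S'
    rw [S.1.preimage_image, ← measure_image S'.2 ((S'.1 ⁻¹' (S.1 '' C)) ∆ C),
      Set.image_symmDiff S'.1.injective, S'.1.image_preimage, symmDiff_comm]
  simp_rw [key]
  exact TopologicalSpace.isOpen_generateFrom_of_mem
    ⟨S, S.1 '' C, δ, S.1.measurableSet_image.2 hC, pos_iff_ne_zero.2 hδ, rfl⟩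

theorem isOpen_setOf_approxByTower [IsFiniteMeasure μ] (P : Finset (Set X)) (ε : ℝ≥0∞) :
    IsOpen {S : AutM X μ | ApproxByTower μ S.1 P ε} := by
  refine isOpen_iff_forall_mem_open.2 fun S ⟨B, n, hBm, hB, hP⟩ => ?_
  choose! I hIn hI using hP
  -- the error bound `n * ((n + 1) * η)` of `approxByTower_of_forall_measure_symmDiff_le`,
  -- for levels within `η = n * δ`
  obtain ⟨δ, hδ, hδP⟩ := exists_pos_forall_add_mul_lt
    (K := n * ((n + 1) * n)) (by finiteness) hI
  refine ⟨⋂ j ∈ Finset.range n,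
      {S' | μ ((S'.1 '' ((⇑S.1)^[j] '' B)) ∆ (S.1 '' ((⇑S.1)^[j] '' B))) < δ},
    fun S' hS' => ?_,
    isOpen_biInter_finset fun j _ =>
      isOpen_setOf_measure_image_symmDiff_lt S (measurableSet_iterate_image S.1 j hBm) δ,
    by simpa using fun _ _ => hδ⟩
  have hclose : ∀ d < n, μ (((⇑S'.1)^[d] '' B) ∆ ((⇑S.1)^[d] '' B)) ≤ n * δ := fun d hd =>
    calc μ (((⇑S'.1)^[d] '' B) ∆ ((⇑S.1)^[d] '' B))
        ≤ ∑ j ∈ Finset.range d, μ ((S'.1 '' ((⇑S.1)^[j] '' B)) ∆ (S.1 '' ((⇑S.1)^[j] '' B))) :=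
          measure_iterate_image_symmDiff_le S'.2 _ B d
      _ ≤ ∑ _j ∈ Finset.range d, δ := Finset.sum_le_sum fun j hj =>
          (Set.mem_iInter₂.1 hS' j (Finset.mem_range.2 ((Finset.mem_range.1 hj).trans hd))).le
      _ ≤ n * δ := by
          rw [Finset.sum_const, Finset.card_range, nsmul_eq_mul]
          gcongr
  refine approxByTower_of_forall_measure_symmDiff_le S'.2 hBm hB
    (fun p hp => ⟨I p, hIn p hp, ?_⟩) hclose
  calc μ (p ∆ ⋃ i ∈ I p, (⇑S.1)^[i] '' B) + n * ((n + 1) * (n * δ))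
      = μ (p ∆ ⋃ i ∈ I p, (⇑S.1)^[i] '' B) + n * ((n + 1) * n) * δ := by ring
    _ < ε := hδP p hp

end AutM

section RankOne

variable {X} {μ : Measure X}

theorem exists_seq_measure_symmDiff_lt [MeasurableSpace.CountablyGenerated X] [IsFiniteMeasure μ] :
    ∃ A : ℕ → Set X, (∀ j, MeasurableSet (A j)) ∧
      ∀ s, MeasurableSet s → ∀ ε : ℝ≥0∞, 0 < ε → ∃ j, μ (s ∆ A j) < ε := by
  obtain ⟨𝒜, h𝒜c, h𝒜⟩ := exists_countable_measureDense (μ := μ)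
  obtain ⟨A, rfl⟩ := h𝒜c.exists_eq_range h𝒜.nonempty
  refine ⟨A, fun j => h𝒜.measurable _ (Set.mem_range_self j), fun s hs ε hε => ?_⟩
  obtain ⟨r, -, hr, hrε⟩ := ENNReal.lt_iff_exists_real_btwn.1 hε
  obtain ⟨_, ⟨j, rfl⟩, hj⟩ :=
    h𝒜.approx s hs (measure_ne_top μ s) r (ENNReal.ofReal_pos.1 hr)
  exact ⟨j, hj.trans hrε⟩

theorem isRankOneMap_of_forall_approxByTower [DecidableEq (Set X)] {A : ℕ → Set X}
    (hA : ∀ s, MeasurableSet s → ∀ ε : ℝ≥0∞, 0 < ε → ∃ j, μ (s ∆ A j) < ε) {f : X → X}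
    (hf : ∀ (F : Finset ℕ) (k : ℕ), ApproxByTower μ f (F.image A) (k : ℝ≥0∞)⁻¹) :
    IsRankOneMap X μ f := by
  refine isRankOneMap_iff.2 fun P hP ε hε => ?_
  have hε2 : ε / 2 ≠ 0 := (ENNReal.half_pos hε.ne').ne'
  choose! j hj using fun p hp => hA p (hP p hp) (ε / 2) (pos_iff_ne_zero.2 hε2)
  obtain ⟨k, hk⟩ := ENNReal.exists_inv_nat_lt hε2
  obtain ⟨B, n, hBm, hB, happ⟩ := hf (P.image j) k
  refine ⟨B, n, hBm, hB, fun p hp => ?_⟩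
  obtain ⟨I, hIn, hI⟩ :=
    happ (A (j p)) (Finset.mem_image_of_mem A (Finset.mem_image_of_mem j hp))
  refine ⟨I, hIn, ?_⟩
  calc μ (p ∆ ⋃ i ∈ I, f^[i] '' B)
      ≤ μ (p ∆ A (j p)) + μ (A (j p) ∆ ⋃ i ∈ I, f^[i] '' B) := measure_symmDiff_le _ _ _
    _ < ε / 2 + ε / 2 := ENNReal.add_lt_add (hj p hp) (hI.trans hk)
    _ = ε := ENNReal.add_halves ε

end RankOne

section Rigidity

variable {X} {μ : Measure X}

def posPowers (T : AutM X μ) : Set (AutM X μ) :=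
  {S | ∃ p : ℕ, 0 < p ∧ ⇑S.1 = (⇑T.1)^[p]}

theorem posPowers_subset_powers (T : AutM X μ) :
    posPowers T ⊆ {S | ∃ n : ℤ, S.1 = mePow X T.1 n} := by
  rintro S ⟨p, -, hp⟩
  exact ⟨p, DFunLike.ext' (by rw [coe_mePow, zpow_natCast, Equiv.Perm.coe_pow, hp]; rfl)⟩

theorem powers_subset_closure_posPowers (T : AutM X μ) (hrig : IsRigidMap X μ T.1) :
    {S | ∃ n : ℤ, S.1 = mePow X T.1 n} ⊆ closure (posPowers T) := by
  obtain ⟨N, hN, hrigN⟩ := hrig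
  rintro S ⟨m, hm⟩
  have hS : ⇑S.1 = ⇑(T.1.toEquiv ^ m) := by rw [hm, coe_mePow]
  let u : ℕ → AutM X μ := fun k =>
    ⟨S.1.trans (mePowNat X T.1 (N k)), (measurePreserving_mePowNat T.2 _).comp S.2⟩
  have hu : Tendsto u atTop (𝓝 S) := by
    refine AutM.tendsto_of_tendsto_measure_preimage_symmDiff fun A hA => ?_
    have hpre : ∀ k, ((u k).1 ⁻¹' A) ∆ (S.1 ⁻¹' A) = S.1 ⁻¹' (((⇑T.1)^[N k] ⁻¹' A) ∆ A) := by
      intro k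
      rw [Set.preimage_symmDiff, ← coe_mePowNat]
      rfl
    simp_rw [hpre, S.2.measure_preimage_equiv]
    exact hrigN A hA
  have hmem : ∀ᶠ k in atTop, u k ∈ posPowers T := by
    filter_upwards [hN.tendsto_atTop.eventually_gt_atTop (-m).toNat] with k hk
    have hp : (((N k : ℤ) + m).toNat : ℤ) = N k + m := Int.toNat_of_nonneg (by omega)
    refine ⟨((N k : ℤ) + m).toNat, by omega, ?_⟩
    calc ⇑(u k).1 = (⇑T.1)^[N k] ∘ ⇑S.1 := by rw [← coe_mePowNat]; rfl
      _ = ⇑(T.1.toEquiv ^ ((N k : ℤ) + m)) := by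
        rw [zpow_add, Equiv.Perm.coe_mul, zpow_natCast, Equiv.Perm.coe_pow, hS]; rfl
      _ = (⇑T.1)^[((N k : ℤ) + m).toNat] := by
        rw [← hp, zpow_natCast, Equiv.Perm.coe_pow]; rfl
  exact mem_closure_of_tendsto hu hmem

theorem wcl_eq_closure_posPowers (T : AutM X μ) (hrig : IsRigidMap X μ T.1) :
    Wcl X μ T = closure (posPowers T) :=
  (closure_minimal (powers_subset_closure_posPowers T hrig) isClosed_closure).antisymm
    (closure_mono (posPowers_subset_powers T))

end Rigidity

/-- If every positive power `T^n` of an invertible measure-preserving transformation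
`T` of a standard probability space is rank one, and `T` is rigid, then the rank one
transformations in the weak closure `Wcl(T)` contain a dense `G_δ` subset of
`Wcl(T)` (with its subspace weak topology). -/
theorem stmt16 [StandardBorelSpace X] (μ : Measure X) [IsProbabilityMeasure μ]
    (T : AutM X μ)
    (hrank : ∀ n : ℕ, 0 < n → IsRankOneMap X μ ((⇑T.1)^[n]))
    (hrig : IsRigidMap X μ ⇑T.1) :
    ∃ R : Set (Wcl X μ T), IsGδ R ∧ Dense R ∧
      ∀ S ∈ R, IsRankOneMap X μ ⇑(S : AutM X μ).1 := by
  classical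
  obtain ⟨A, hAm, hA⟩ := exists_seq_measure_symmDiff_lt (μ := μ)
  set G : Set (AutM X μ) :=
    ⋂ (F : Finset ℕ) (k : ℕ), {S | ApproxByTower μ S.1 (F.image A) (k : ℝ≥0∞)⁻¹}
  have hG : IsGδ G :=
    .iInter fun F => .iInter fun k => (AutM.isOpen_setOf_approxByTower _ _).isGδ
  have hTG : posPowers T ⊆ G := by
    rintro S ⟨p, hp, hSp⟩
    refine Set.mem_iInter₂.2 fun F k => ?_
    rw [Set.mem_ofPred_eq, hSp]
    refine isRankOneMap_iff.1 (hrank p hp) _ ?_ _ (by simp)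
    simpa using fun j _ => hAm j
  refine ⟨Subtype.val ⁻¹' G, hG.preimage continuous_subtype_val, ?_,
    fun S hS => isRankOneMap_of_forall_approxByTower hA fun F k => Set.mem_iInter₂.1 hS F k⟩
  have hWcl : Wcl X μ T = closure (posPowers T) := wcl_eq_closure_posPowers T hrig
  rw [Topology.IsInducing.subtypeVal.dense_iff]
  rintro ⟨S, hS⟩
  refine closure_mono (fun S' hS' => ?_) (hWcl ▸ hS)
  exact ⟨⟨S', hWcl ▸ subset_closure hS'⟩, hTG hS', rfl⟩
end
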